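/- For semi-implicit methods and q ≥ 1/2, the maximum growth functions are: max{𝔥_s(τ): ρ(τ)≤q} = ⌊q+1/2⌋ for simple iterations, max{𝔯_s(τ): ρ(τ)≤q} = ⌊(2/3)(q+1)⌋ for modified Newton iterations, and max{𝔡_s(τ): ρ(τ)≤q} = ⌊log₂((q+1)/3)⌋ + 2 for full Newton iterations. -/

import Mathlib

inductive CTree (m : ℕ) : Type
  | node : Fin (m + 1) → List (CTree m) → CTree m

namespace CTree

variable {m : ℕ}

def rho : CTree m → ℚ
  | .node l ts => (if (l : ℕ) = 0 then 1 else 1/2) + (ts.attach.map (fun t => rho t.1)).sum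
decreasing_by
  all_goals try simp only [CTree.node.sizeOf_spec, List.cons.sizeOf_spec, List.nil.sizeOf_spec]
  all_goals try have := List.sizeOf_lt_of_mem t.2
  all_goals omega

def height : CTree m → ℕ
  | .node _ ts => 1 + (ts.attach.map (fun t => height t.1)).foldr max 0
decreasing_by
  all_goals try simp only [CTree.node.sizeOf_spec, List.cons.sizeOf_spec, List.nil.sizeOf_spec]
  all_goals try have := List.sizeOf_lt_of_mem t.2
  all_goals omega

def ram : CTree m → ℕ
  | .node _ [] => 1
  | .node _ [t] => ram t
  | .node _ ts => 1 + (ts.attach.map (fun t => ram t.1)).foldr max 0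
decreasing_by
  all_goals try simp only [CTree.node.sizeOf_spec, List.cons.sizeOf_spec, List.nil.sizeOf_spec]
  all_goals try have := List.sizeOf_lt_of_mem t.2
  all_goals omega

def dbl : CTree m → ℕ
  | .node _ [] => 1
  | .node _ ts =>
      let ds := ts.attach.map (fun t => dbl t.1)
      let M := ds.foldr max 0
      if 2 ≤ ds.count M then M + 1 else M
decreasing_by
  all_goals try simp only [CTree.node.sizeOf_spec, List.cons.sizeOf_spec, List.nil.sizeOf_spec]
  all_goals try have := List.sizeOf_lt_of_mem t.2
  all_goals omega


/-- semi-implicit height-type growth function 𝔥ₛ -/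
def hs : CTree m → ℕ
  | .node l ts => if 0 < (l : ℕ) then 1 else 1 + (ts.attach.map (fun t => hs t.1)).foldr max 0
decreasing_by
  all_goals try simp only [CTree.node.sizeOf_spec, List.cons.sizeOf_spec, List.nil.sizeOf_spec]
  all_goals try have := List.sizeOf_lt_of_mem t.2
  all_goals omega

/-- semi-implicit ramification-type growth function 𝔯ₛ -/
def rs : CTree m → ℕ
  | .node _ [] => 1
  | .node l [t] => if 0 < (l : ℕ) then 1 else rs t
  | .node l ts => if 0 < (l : ℕ) then 1 else 1 + (ts.attach.map (fun t => rs t.1)).foldr max 0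
decreasing_by
  all_goals try simp only [CTree.node.sizeOf_spec, List.cons.sizeOf_spec, List.nil.sizeOf_spec]
  all_goals try have := List.sizeOf_lt_of_mem t.2
  all_goals omega

/-- semi-implicit doubling-type growth function 𝔡ₛ -/
def dsm : CTree m → ℕ
  | .node _ [] => 1
  | .node l ts =>
      if 0 < (l : ℕ) then 1 else
      let vals := ts.attach.map (fun t => dsm t.1)
      let M := vals.foldr max 0
      if 2 ≤ vals.count M then M + 1 else M
decreasing_by
  all_goals try simp only [CTree.node.sizeOf_spec, List.cons.sizeOf_spec, List.nil.sizeOf_spec]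
  all_goals try have := List.sizeOf_lt_of_mem t.2
  all_goals omega


end CTree

/-! Each growth function is bounded by an affine function of `ρ`, by structural induction:
`𝔥_s τ ≤ ρ τ + 1/2`, `3 𝔯_s τ ≤ 2 ρ τ + 2` and `3 · 2 ^ 𝔡_s τ ≤ 4 ρ τ + 4`. At a color-0 root the
value is governed by a child attaining the maximum; when `𝔯_s` or `𝔡_s` goes up by one, a second
child pays for the step in `ρ` (at least `1/2` for `𝔯_s`, as much as the maximal child for `𝔡_s`).
The bounds are attained by trees all of whose leaves are stochastic: a path for `𝔥_s`, a comb
(every color-0 node carries one extra stochastic leaf) for `𝔯_s`, and the perfect binary tree for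
`𝔡_s`. -/

namespace List

variable {α R : Type*} [CommRing R] [LinearOrder R] [IsStrictOrderedRing R]

theorem le_sum_map_of_nonneg {g : α → R} {l : List α} (hg : ∀ t ∈ l, 0 ≤ g t) {t : α}
    (ht : t ∈ l) : g t ≤ (l.map g).sum :=
  single_le_sum (fun _ hx => by obtain ⟨u, hu, rfl⟩ := mem_map.mp hx; exact hg u hu)
    _ (mem_map_of_mem ht)

theorem two_mul_le_sum_map_of_two_le_count {f : α → ℕ} {g : α → R} {M : ℕ} {B : R} :
    ∀ {l : List α}, (∀ t ∈ l, 0 ≤ g t) → (∀ t ∈ l, f t = M → B ≤ g t) →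
      2 ≤ (l.map f).count M → 2 * B ≤ (l.map g).sum
  | [], _, _, hc => by simp at hc
  | a :: l, hg, hB, hc => by
    rw [map_cons, sum_cons]
    have hgl : ∀ t ∈ l, 0 ≤ g t := fun t ht => hg t (mem_cons_of_mem _ ht)
    by_cases ha : f a = M
    · rw [map_cons, ha, count_cons_self] at hc
      have hpos : 0 < (l.map f).count M := by omega
      obtain ⟨b, hb, hbM⟩ := mem_map.mp (count_pos_iff.mp hpos)
      linarith [hB a mem_cons_self ha, hB b (mem_cons_of_mem _ hb) hbM,
        le_sum_map_of_nonneg hgl hb]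
    · rw [map_cons, count_cons_of_ne ha] at hc
      linarith [hg a mem_cons_self,
        two_mul_le_sum_map_of_two_le_count hgl (fun t ht => hB t (mem_cons_of_mem _ ht)) hc]

theorem exists_mem_foldr_max_map_eq (f : α → ℕ) {l : List α} (hl : l ≠ []) :
    ∃ t ∈ l, (l.map f).foldr max 0 = f t := by
  have hmem : (l.map f).foldr max ⊥ ∈ l.map f :=
    maximum_mem (foldr_max_of_ne_nil (by simpa using hl)).symm
  obtain ⟨t, ht, hval⟩ := mem_map.mp hmem
  exact ⟨t, ht, hval.symm⟩

end List

theorem Real.le_floor_logb_iff {b x : ℝ} (hb : 1 < b) (hx : 0 < x) {n : ℤ} :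
    n ≤ ⌊Real.logb b x⌋ ↔ b ^ n ≤ x := by
  rw [Int.le_floor, Real.le_logb_iff_rpow_le hb hx, Real.rpow_intCast]

namespace CTree

variable {m : ℕ}

@[induction_eliminator]
theorem induction {motive : CTree m → Prop}
    (node : ∀ l ts, (∀ t ∈ ts, motive t) → motive (node l ts)) : ∀ t, motive t
  | .node l ts => node l ts fun t _ => induction node t
decreasing_by
  have := List.sizeOf_lt_of_mem ‹t ∈ ts›
  simp only [CTree.node.sizeOf_spec]
  omega

theorem rho_node (l : Fin (m + 1)) (ts : List (CTree m)) :
    rho (node l ts) = (if (l : ℕ) = 0 then 1 else 1/2) + (ts.map rho).sum := by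
  rw [rho, List.attach_map_val]

theorem hs_node (l : Fin (m + 1)) (ts : List (CTree m)) :
    hs (node l ts) = if 0 < (l : ℕ) then 1 else 1 + (ts.map hs).foldr max 0 := by
  rw [hs, List.attach_map_val]

theorem rs_nil (l : Fin (m + 1)) : rs (node l ([] : List (CTree m))) = 1 := by
  rw [rs]

theorem rs_singleton (l : Fin (m + 1)) (t : CTree m) :
    rs (node l [t]) = if 0 < (l : ℕ) then 1 else rs t := by
  rw [rs]

theorem rs_cons_cons (l : Fin (m + 1)) (a b : CTree m) (ts : List (CTree m)) :
    rs (node l (a :: b :: ts)) =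
      if 0 < (l : ℕ) then 1 else 1 + ((a :: b :: ts).map rs).foldr max 0 := by
  rw [rs, List.attach_map_val] <;> simp

theorem dsm_nil (l : Fin (m + 1)) : dsm (node l ([] : List (CTree m))) = 1 := by
  rw [dsm]

theorem dsm_cons (l : Fin (m + 1)) (a : CTree m) (ts : List (CTree m)) :
    dsm (node l (a :: ts)) =
      if 0 < (l : ℕ) then 1 else
      let vals := (a :: ts).map dsm
      let M := vals.foldr max 0
      if 2 ≤ vals.count M then M + 1 else M := by
  rw [dsm, List.attach_map_val]
  simp

theorem half_le_rho (t : CTree m) : 1/2 ≤ rho t := by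
  induction t with
  | node l ts ih =>
    have hsum : 0 ≤ (ts.map rho).sum :=
      List.sum_nonneg fun x hx => by
        obtain ⟨t, ht, rfl⟩ := List.mem_map.mp hx
        linarith [ih t ht]
    rw [rho_node]
    split <;> linarith

theorem sum_map_rho_nonneg (ts : List (CTree m)) : 0 ≤ (ts.map rho).sum :=
  List.sum_nonneg fun x hx => by
    obtain ⟨t, _, rfl⟩ := List.mem_map.mp hx
    linarith [half_le_rho t]

theorem rho_le_sum_map_rho {ts : List (CTree m)} {t : CTree m} (ht : t ∈ ts) :
    rho t ≤ (ts.map rho).sum :=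
  List.le_sum_map_of_nonneg (fun u _ => by linarith [half_le_rho u]) ht

theorem rho_add_half_le_sum_map_rho {ts : List (CTree m)} {t : CTree m} (ht : t ∈ ts)
    (hlen : 2 ≤ ts.length) : rho t + 1/2 ≤ (ts.map rho).sum := by
  classical
  obtain ⟨u, hu⟩ := List.exists_mem_of_ne_nil (ts.erase t)
    (List.ne_nil_of_length_pos (by rw [List.length_erase_of_mem ht]; omega))
  rw [((List.perm_cons_erase ht).map rho).sum_eq, List.map_cons, List.sum_cons]
  linarith [half_le_rho u, rho_le_sum_map_rho hu]

theorem hs_le_rho_add_half (τ : CTree m) : (hs τ : ℚ) ≤ rho τ + 1/2 := by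
  induction τ with
  | node l ts ih =>
    have hsum := sum_map_rho_nonneg ts
    rw [hs_node, rho_node]
    by_cases hl : 0 < (l : ℕ)
    · rw [if_pos hl, if_neg hl.ne']
      push_cast
      linarith
    rw [if_neg hl, if_pos (Nat.eq_zero_of_not_pos hl)]
    rcases eq_or_ne ts [] with rfl | hts
    · norm_num
    obtain ⟨t, ht, hmax⟩ := List.exists_mem_foldr_max_map_eq hs hts
    rw [hmax]
    push_cast
    linarith [ih t ht, rho_le_sum_map_rho ht]

theorem three_mul_rs_le (τ : CTree m) : 3 * (rs τ : ℚ) ≤ 2 * (rho τ + 1) := by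
  induction τ with
  | node l ts ih =>
    have hρ := half_le_rho (node l ts)
    match ts with
    | [] => rw [rs_nil]; push_cast; linarith
    | [t] =>
      rw [rs_singleton]
      split
      · push_cast; linarith
      · rw [rho_node, if_pos (by omega)]
        simp only [List.map_cons, List.map_nil, List.sum_cons, List.sum_nil, add_zero]
        linarith [ih t List.mem_cons_self]
    | a :: b :: ts =>
      rw [rs_cons_cons]
      split
      · push_cast; linarith
      · obtain ⟨t, ht, hmax⟩ := List.exists_mem_foldr_max_map_eq rs (List.cons_ne_nil a (b :: ts))
        rw [hmax, rho_node, if_pos (by omega)]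
        push_cast
        linarith [ih t ht, rho_add_half_le_sum_map_rho ht (by simp)]

theorem three_mul_two_pow_dsm_le (τ : CTree m) : 3 * (2 : ℚ) ^ dsm τ ≤ 4 * (rho τ + 1) := by
  induction τ with
  | node l ts ih =>
    have hρ := half_le_rho (node l ts)
    match ts with
    | [] => rw [dsm_nil]; linarith
    | a :: ts =>
      rw [dsm_cons]
      by_cases hl : 0 < (l : ℕ)
      · rw [if_pos hl]; linarith
      rw [if_neg hl, rho_node, if_pos (Nat.eq_zero_of_not_pos hl)]
      obtain ⟨t, ht, hmax⟩ := List.exists_mem_foldr_max_map_eq dsm (List.cons_ne_nil a ts)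
      simp only
      set M := ((a :: ts).map dsm).foldr max 0
      have hsum := sum_map_rho_nonneg (a :: ts)
      split_ifs with hdouble
      · have hpair := List.two_mul_le_sum_map_of_two_le_count (l := a :: ts) (f := dsm) (g := rho)
          (B := 3 * 2 ^ M / 4 - 1) (fun u _ => by linarith [half_le_rho u])
          (fun u hu huM => by rw [← huM]; linarith [ih u hu]) hdouble
        rw [pow_succ]
        linarith
      · rw [hmax]
        linarith [ih t ht, rho_le_sum_map_rho ht]

def stochLeaf (m : ℕ) : CTree m := node (Fin.last m) []

def path : ℕ → CTree m
  | 0 => stochLeaf m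
  | n + 1 => node 0 [path n]

def comb : ℕ → CTree m
  | 0 => stochLeaf m
  | n + 1 => node 0 [comb n, stochLeaf m]

def perfectBinary : ℕ → CTree m
  | 0 => stochLeaf m
  | n + 1 => node 0 [perfectBinary n, perfectBinary n]

theorem rho_stochLeaf (hm : 0 < m) : rho (stochLeaf m) = 1/2 := by
  rw [stochLeaf, rho_node, if_neg (by simp only [Fin.val_last]; omega)]
  simp

theorem hs_stochLeaf : hs (stochLeaf m) = 1 := by
  rw [stochLeaf, hs_node]
  split <;> rfl

theorem rs_stochLeaf : rs (stochLeaf m) = 1 := rs_nil _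

theorem dsm_stochLeaf : dsm (stochLeaf m) = 1 := dsm_nil _

theorem rho_path (hm : 0 < m) : ∀ n, rho (path (m := m) n) = n + 1/2
  | 0 => by rw [path, rho_stochLeaf hm]; norm_num
  | n + 1 => by
    rw [path, rho_node, Fin.val_zero, if_pos rfl]
    simp only [List.map_cons, List.map_nil, List.sum_cons, List.sum_nil, rho_path hm n]
    push_cast
    ring

theorem hs_path : ∀ n, hs (path (m := m) n) = n + 1
  | 0 => hs_stochLeaf
  | n + 1 => by
    rw [path, hs_node, Fin.val_zero, if_neg (lt_irrefl 0)]
    simp only [List.map_cons, List.map_nil, List.foldr_cons, List.foldr_nil, hs_path n]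
    omega

theorem rho_comb (hm : 0 < m) : ∀ n, rho (comb (m := m) n) = (3 * n + 1) / 2
  | 0 => by rw [comb, rho_stochLeaf hm]; norm_num
  | n + 1 => by
    rw [comb, rho_node, Fin.val_zero, if_pos rfl]
    simp only [List.map_cons, List.map_nil, List.sum_cons, List.sum_nil, rho_comb hm n, rho_stochLeaf hm]
    push_cast
    ring

theorem rs_comb : ∀ n, rs (comb (m := m) n) = n + 1
  | 0 => rs_stochLeaf
  | n + 1 => by
    rw [comb, rs_cons_cons, Fin.val_zero, if_neg (lt_irrefl 0)]
    simp only [List.map_cons, List.map_nil, List.foldr_cons, List.foldr_nil, rs_comb n, rs_stochLeaf]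
    omega

theorem rho_perfectBinary (hm : 0 < m) :
    ∀ n, rho (perfectBinary (m := m) n) = 3 * 2 ^ n / 2 - 1
  | 0 => by rw [perfectBinary, rho_stochLeaf hm]; norm_num
  | n + 1 => by
    rw [perfectBinary, rho_node, Fin.val_zero, if_pos rfl]
    simp only [List.map_cons, List.map_nil, List.sum_cons, List.sum_nil, rho_perfectBinary hm n]
    ring

theorem dsm_perfectBinary : ∀ n, dsm (perfectBinary (m := m) n) = n + 1
  | 0 => dsm_stochLeaf
  | n + 1 => by
    rw [perfectBinary, dsm_cons, Fin.val_zero, if_neg (lt_irrefl 0)]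
    simp [dsm_perfectBinary n]

theorem isGreatest_hs (hm : 0 < m) {q : ℚ} (hq : 1/2 ≤ q) :
    IsGreatest {k : ℕ | ∃ τ : CTree m, rho τ ≤ q ∧ hs τ = k} ⌊q + 1/2⌋.toNat := by
  rw [Int.floor_toNat]
  have hpos : 1 ≤ ⌊q + 1/2⌋₊ := Nat.le_floor (by push_cast; linarith)
  obtain ⟨n, hn⟩ : ∃ n, ⌊q + 1/2⌋₊ = n + 1 := ⟨_, (Nat.sub_add_cancel hpos).symm⟩
  refine ⟨⟨path n, ?_, by rw [hs_path, hn]⟩, ?_⟩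
  · have hfloor := Nat.floor_le (show 0 ≤ q + 1/2 by linarith)
    rw [hn] at hfloor
    push_cast at hfloor
    rw [rho_path hm]
    linarith
  · rintro _ ⟨τ, hτ, rfl⟩
    exact Nat.le_floor (by linarith [hs_le_rho_add_half τ])

theorem isGreatest_rs (hm : 0 < m) {q : ℚ} (hq : 1/2 ≤ q) :
    IsGreatest {k : ℕ | ∃ τ : CTree m, rho τ ≤ q ∧ rs τ = k} ⌊(2 : ℚ)/3 * (q + 1)⌋.toNat := by
  rw [Int.floor_toNat]
  have hpos : 1 ≤ ⌊(2 : ℚ)/3 * (q + 1)⌋₊ := Nat.le_floor (by push_cast; linarith)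
  obtain ⟨n, hn⟩ : ∃ n, ⌊(2 : ℚ)/3 * (q + 1)⌋₊ = n + 1 := ⟨_, (Nat.sub_add_cancel hpos).symm⟩
  refine ⟨⟨comb n, ?_, by rw [rs_comb, hn]⟩, ?_⟩
  · have hfloor := Nat.floor_le (show 0 ≤ (2 : ℚ)/3 * (q + 1) by linarith)
    rw [hn] at hfloor
    push_cast at hfloor
    rw [rho_comb hm]
    linarith
  · rintro _ ⟨τ, hτ, rfl⟩
    exact Nat.le_floor (by linarith [three_mul_rs_le τ])

theorem isGreatest_dsm (hm : 0 < m) {q : ℚ} (hq : 1/2 ≤ q) :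
    IsGreatest {k : ℕ | ∃ τ : CTree m, rho τ ≤ q ∧ dsm τ = k}
      ((⌊Real.logb 2 (((q : ℝ) + 1) / 3)⌋ + 2).toNat) := by
  have hqR : (1/2 : ℝ) ≤ q := by simpa using (Rat.cast_le (K := ℝ)).mpr hq
  have hx : (0 : ℝ) < (q + 1) / 3 := by linarith
  set L := ⌊Real.logb 2 (((q : ℝ) + 1) / 3)⌋
  have hL : -1 ≤ L := (Real.le_floor_logb_iff one_lt_two hx).2 (by rw [zpow_neg_one]; linarith)
  obtain ⟨n, hn⟩ : ∃ n : ℕ, (n : ℤ) = L + 1 := ⟨(L + 1).toNat, by omega⟩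
  refine ⟨⟨perfectBinary n, ?_, by rw [dsm_perfectBinary]; omega⟩, ?_⟩
  · have h2L : (2 : ℝ) ^ L ≤ (q + 1) / 3 := (Real.le_floor_logb_iff one_lt_two hx).1 le_rfl
    have h2n : (2 : ℝ) ^ n = 2 * 2 ^ L := by
      rw [← zpow_natCast, hn, zpow_add_one₀ two_ne_zero, mul_comm]
    have : ((3 * 2 ^ n / 2 - 1 : ℚ) : ℝ) ≤ q := by push_cast; linarith
    rw [rho_perfectBinary hm]
    exact_mod_cast this
  · rintro _ ⟨τ, hτ, rfl⟩
    have hd : (3 * 2 ^ dsm τ : ℝ) ≤ 4 * (q + 1) := by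
      exact_mod_cast (three_mul_two_pow_dsm_le τ).trans (by linarith)
    have : (dsm τ : ℤ) - 2 ≤ L := by
      refine (Real.le_floor_logb_iff one_lt_two hx).2 ?_
      rw [zpow_sub₀ two_ne_zero, zpow_natCast]
      norm_num
      linarith
    omega

end CTree

open CTree in
theorem stmt12 (m : ℕ) (hm : 1 ≤ m) (q : ℚ) (hq : 1/2 ≤ q) :
    IsGreatest {k : ℕ | ∃ τ : CTree m, rho τ ≤ q ∧ hs τ = k} (⌊q + 1/2⌋.toNat)
    ∧ IsGreatest {k : ℕ | ∃ τ : CTree m, rho τ ≤ q ∧ rs τ = k} (⌊(2 : ℚ)/3 * (q + 1)⌋.toNat)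
    ∧ IsGreatest {k : ℕ | ∃ τ : CTree m, rho τ ≤ q ∧ dsm τ = k}
        ((⌊Real.logb 2 (((q : ℝ) + 1) / 3)⌋ + 2).toNat) :=
  ⟨isGreatest_hs hm hq, isGreatest_rs hm hq, isGreatest_dsm hm hq⟩
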